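/- Variance reduction in the interpolation regime: let X ∈ ℝ^{n×k} with k > n such that X and all X_{−j} have full row rank. Let Y be a square-integrable random vector in ℝ^n, β̂ = Xᵀ(XXᵀ)⁻¹Y, and β̂^{(−j)} the corresponding minimum-norm estimator using X_{−j}. Then trace Var(β̂) ≤ min_j trace Var(β̂^{(−j)}). -/

import Mathlib

/-!
If `X b = y`, then the minimum-norm solution is `Xᵀ(XXᵀ)⁻¹ y = P b` with `P = Xᵀ(XXᵀ)⁻¹X`,
the orthogonal projection onto the row space of `X`. The leave-one-out estimator, padded with a
zero, interpolates `Y` on `X` itself, so `β̂ = P β̂^{(−j)}` pointwise in `ω`; hence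
`β̂ − Eβ̂ = P (β̂^{(−j)} − Eβ̂^{(−j)})`, and a projection can only shrink squared norms.
-/

open Matrix BigOperators MeasureTheory

/-- The matrix `X` with column `j` deleted. -/
noncomputable def delCol {n k : ℕ} (X : Matrix (Fin n) (Fin k) ℝ) (j : Fin k) :
    Matrix (Fin n) {i : Fin k // i ≠ j} ℝ :=
  X.submatrix id Subtype.val

/-- Minimum-norm interpolating least-squares solution `Xᵀ(XXᵀ)⁻¹Y`. -/
noncomputable def minNorm {n : ℕ} {m : Type*} [Fintype m]
    (X : Matrix (Fin n) m ℝ) (Y : Fin n → ℝ) : m → ℝ :=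
  Xᵀ *ᵥ ((X * Xᵀ)⁻¹ *ᵥ Y)

/-- Minimum-norm interpolating solution on `X` with column `j` deleted,
embedded with zero `j`-th coordinate. -/
noncomputable def minNormDel {n k : ℕ} (X : Matrix (Fin n) (Fin k) ℝ) (j : Fin k)
    (Y : Fin n → ℝ) : Fin k → ℝ :=
  fun i => if h : i = j then 0 else minNorm (delCol X j) Y ⟨i, h⟩

/-- Trace of the covariance matrix of a random vector: `∑_i Var(Z_i)`. -/
noncomputable def traceVar {Ω : Type*} [MeasurableSpace Ω] (μ : Measure Ω)
    {m : Type*} [Fintype m] (Z : Ω → m → ℝ) : ℝ :=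
  ∑ i, ∫ ω, (Z ω i - ∫ ω', Z ω' i ∂μ) ^ 2 ∂μ

theorem Matrix.isUnit_det_of_rank_eq_card {ι K : Type*} [Fintype ι] [DecidableEq ι] [Field K]
    {A : Matrix ι ι K} (h : A.rank = Fintype.card ι) : IsUnit A.det :=
  (isUnit_iff_isUnit_det A).mp <| linearIndependent_rows_iff_isUnit.mp <|
    linearIndependent_iff_card_eq_finrank_span.mpr <| by
      rw [Set.finrank, ← rank_eq_finrank_span_row, h]

section RowSpaceProjection

variable {ι m : Type*} [Fintype ι] [DecidableEq ι] [Fintype m]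

-- If `X * Xᵀ` is singular then `(X * Xᵀ)⁻¹ = 0`, so this is `0`: still a symmetric idempotent.
noncomputable def rowSpaceProj (X : Matrix ι m ℝ) : Matrix m m ℝ :=
  Xᵀ * (X * Xᵀ)⁻¹ * X

theorem rowSpaceProj_transpose (X : Matrix ι m ℝ) : (rowSpaceProj X)ᵀ = rowSpaceProj X := by
  simp only [rowSpaceProj, transpose_mul, transpose_transpose, transpose_nonsing_inv,
    Matrix.mul_assoc]

theorem rowSpaceProj_mul_self (X : Matrix ι m ℝ) :
    rowSpaceProj X * rowSpaceProj X = rowSpaceProj X := by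
  by_cases h : IsUnit (X * Xᵀ).det
  · calc rowSpaceProj X * rowSpaceProj X
        = Xᵀ * ((X * Xᵀ)⁻¹ * ((X * Xᵀ) * ((X * Xᵀ)⁻¹ * X))) := by
          simp only [rowSpaceProj, Matrix.mul_assoc]
      _ = rowSpaceProj X := by
          rw [nonsing_inv_mul_cancel_left _ _ h, rowSpaceProj, Matrix.mul_assoc]
  · simp [rowSpaceProj, nonsing_inv_apply_not_isUnit _ h]

end RowSpaceProjection

theorem Matrix.dotProduct_mulVec_self_le {m : Type*} [Fintype m] {P : Matrix m m ℝ}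
    (hsymm : Pᵀ = P) (hidem : P * P = P) (v : m → ℝ) :
    P *ᵥ v ⬝ᵥ P *ᵥ v ≤ v ⬝ᵥ v := by
  have hPv : P *ᵥ v ⬝ᵥ P *ᵥ v = v ⬝ᵥ P *ᵥ v := by
    rw [dotProduct_mulVec, ← mulVec_transpose, hsymm, mulVec_mulVec, hidem, dotProduct_comm]
  have hnonneg : 0 ≤ (v - P *ᵥ v) ⬝ᵥ (v - P *ᵥ v) :=
    Finset.sum_nonneg fun i _ => mul_self_nonneg _
  simp only [sub_dotProduct, dotProduct_sub, dotProduct_comm (P *ᵥ v) v] at hnonneg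
  linarith

section MinNorm

variable {n : ℕ}

theorem minNorm_eq_rowSpaceProj_mulVec {m : Type*} [Fintype m] {X : Matrix (Fin n) m ℝ}
    {b : m → ℝ} {y : Fin n → ℝ} (h : X *ᵥ b = y) : minNorm X y = rowSpaceProj X *ᵥ b := by
  rw [rowSpaceProj, ← mulVec_mulVec, ← mulVec_mulVec, h, minNorm]

theorem mulVec_minNorm_of_rank_eq {m : Type*} [Fintype m] {X : Matrix (Fin n) m ℝ}
    (h : X.rank = n) (y : Fin n → ℝ) : X *ᵥ minNorm X y = y := by
  have hdet : IsUnit (X * Xᵀ).det :=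
    isUnit_det_of_rank_eq_card (by rw [rank_self_mul_transpose, h, Fintype.card_fin])
  rw [minNorm, mulVec_mulVec, mulVec_mulVec, mul_nonsing_inv _ hdet, one_mulVec]

theorem mulVec_minNormDel {k : ℕ} (X : Matrix (Fin n) (Fin k) ℝ) (j : Fin k) (y : Fin n → ℝ) :
    X *ᵥ minNormDel X j y = delCol X j *ᵥ minNorm (delCol X j) y := by
  ext r
  simp only [mulVec, dotProduct, Fintype.sum_eq_add_sum_subtype_ne _ j, minNormDel, delCol,
    dif_pos, mul_zero, zero_add]
  exact Finset.sum_congr rfl fun i _ => by rw [dif_neg i.prop]; rfl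

end MinNorm

section TraceVar

variable {Ω ι : Type*} [MeasurableSpace Ω] {μ : Measure Ω} [Fintype ι] {Z : Ω → ι → ℝ}

theorem memLp_mulVec {m : Type*} (hZ : ∀ i, MemLp (fun ω => Z ω i) 2 μ) (A : Matrix m ι ℝ)
    (i : m) : MemLp (fun ω => (A *ᵥ Z ω) i) 2 μ :=
  memLp_finsetSum _ fun l _ => (hZ l).const_mul (A i l)

theorem integral_mulVec {m : Type*} (hZ : ∀ i, Integrable (fun ω => Z ω i) μ)
    (A : Matrix m ι ℝ) (i : m) :
    ∫ ω, (A *ᵥ Z ω) i ∂μ = (A *ᵥ fun l => ∫ ω, Z ω l ∂μ) i := by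
  simp only [mulVec, dotProduct]
  rw [integral_finsetSum _ fun l _ => (hZ l).const_mul (A i l)]
  simp only [integral_const_mul]

variable [IsFiniteMeasure μ]

theorem integrable_sub_dotProduct_sub (hZ : ∀ i, MemLp (fun ω => Z ω i) 2 μ) (c : ι → ℝ) :
    Integrable (fun ω => (Z ω - c) ⬝ᵥ (Z ω - c)) μ :=
  integrable_finsetSum _ fun i _ => by
    simpa only [sq, Pi.sub_apply] using ((hZ i).sub (memLp_const (c i))).integrable_sq

theorem traceVar_eq_integral_dotProduct (hZ : ∀ i, MemLp (fun ω => Z ω i) 2 μ) :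
    traceVar μ Z =
      ∫ ω, (Z ω - fun i => ∫ ω', Z ω' i ∂μ) ⬝ᵥ (Z ω - fun i => ∫ ω', Z ω' i ∂μ) ∂μ := by
  have hsq (i : ι) : Integrable (fun ω => (Z ω i - ∫ ω', Z ω' i ∂μ) ^ 2) μ :=
    ((hZ i).sub (memLp_const _)).integrable_sq
  rw [traceVar, ← integral_finsetSum _ fun i _ => hsq i]
  simp only [dotProduct, Pi.sub_apply, sq]

theorem traceVar_mulVec_le {P : Matrix ι ι ℝ} (hP : ∀ v, P *ᵥ v ⬝ᵥ P *ᵥ v ≤ v ⬝ᵥ v)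
    (hZ : ∀ i, MemLp (fun ω => Z ω i) 2 μ) :
    traceVar μ (fun ω => P *ᵥ Z ω) ≤ traceVar μ Z := by
  have hmean : (fun i => ∫ ω, (P *ᵥ Z ω) i ∂μ) = P *ᵥ fun i => ∫ ω, Z ω i ∂μ :=
    funext <| integral_mulVec (fun i => (hZ i).integrable one_le_two) P
  rw [traceVar_eq_integral_dotProduct (memLp_mulVec hZ P), traceVar_eq_integral_dotProduct hZ,
    hmean]
  refine integral_mono_of_nonneg (.of_forall fun ω => ?_) (integrable_sub_dotProduct_sub hZ _)
    (.of_forall fun ω => ?_)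
  · exact Finset.sum_nonneg fun i _ => mul_self_nonneg _
  · simpa only [← mulVec_sub] using hP _

end TraceVar

theorem memLp_minNormDel {n k : ℕ} {Ω : Type*} [MeasurableSpace Ω] {μ : Measure Ω}
    {Y : Ω → Fin n → ℝ} (hY : ∀ i, MemLp (fun ω => Y ω i) 2 μ) (X : Matrix (Fin n) (Fin k) ℝ)
    (j l : Fin k) : MemLp (fun ω => minNormDel X j (Y ω) l) 2 μ := by
  by_cases h : l = j
  · simp only [minNormDel, dif_pos h]
    exact MemLp.zero
  · simpa only [minNormDel, dif_neg h, minNorm, mulVec_mulVec] using memLp_mulVec hY _ _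

theorem variance_reduction_interpolation_general {n k : ℕ}
    (X : Matrix (Fin n) (Fin k) ℝ)
    (hXd : ∀ j : Fin k, (delCol X j).rank = n)
    {Ω : Type*} [MeasurableSpace Ω] (μ : Measure Ω) [IsProbabilityMeasure μ]
    (Y : Ω → Fin n → ℝ) (hY : ∀ i, MemLp (fun ω => Y ω i) 2 μ) :
    ∀ j : Fin k,
      traceVar μ (fun ω => minNorm X (Y ω)) ≤
        traceVar μ (fun ω => minNormDel X j (Y ω)) := by
  intro j
  have hproj (ω : Ω) : minNorm X (Y ω) = rowSpaceProj X *ᵥ minNormDel X j (Y ω) :=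
    minNorm_eq_rowSpaceProj_mulVec <| by
      rw [mulVec_minNormDel, mulVec_minNorm_of_rank_eq (hXd j)]
  simp only [hproj]
  exact traceVar_mulVec_le
    (dotProduct_mulVec_self_le (rowSpaceProj_transpose X) (rowSpaceProj_mul_self X))
    (memLp_minNormDel hY X j)

/-- Variance reduction in the interpolation regime: the trace of the variance of
the minimum-norm interpolating estimator is at most that of every
leave-one-covariate-out estimator. -/
theorem variance_reduction_interpolation {n k : ℕ} (hkn : n < k)
    (X : Matrix (Fin n) (Fin k) ℝ) (hX : X.rank = n)
    (hXd : ∀ j : Fin k, (delCol X j).rank = n)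
    {Ω : Type*} [MeasurableSpace Ω] (μ : Measure Ω) [IsProbabilityMeasure μ]
    (Y : Ω → Fin n → ℝ) (hY : ∀ i, MemLp (fun ω => Y ω i) 2 μ) :
    ∀ j : Fin k,
      traceVar μ (fun ω => minNorm X (Y ω)) ≤
        traceVar μ (fun ω => minNormDel X j (Y ω)) :=
  variance_reduction_interpolation_general X hXd μ Y hY
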